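/- Covariance of SSC position observables under Poincaré transformations: Let Λ : ℝ⁴ → ℝ⁴ be linear with η(Λx, Λy) = η(x,y) for all x,y and mapping future-directed timelike vectors to future-directed timelike vectors, and let a ∈ ℝ⁴. Let P be future-directed timelike, J_{μν} antisymmetric, f future-directed timelike, u future-directed unit timelike, and τ ∈ ℝ. Define the transformed data P' := ΛP, J'_{μν} := J_{ρσ}(Λ⁻¹)^ρ{}_μ(Λ⁻¹)^σ{}_ν + a_μ P_ρ(Λ⁻¹)^ρ{}_ν − a_ν P_ρ(Λ⁻¹)^ρ{}_μ, f' := Λf, u' := Λu, τ' := τ − η(Λu, a). Then the SSC position computed from (P', J', f') on the hyperplane (u', τ') equals the Poincaré transform of the original: χ'(u', τ') = Λ·χ(u,τ) + a. -/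

import Mathlib

noncomputable section

open scoped BigOperators

/-- The Minkowski bilinear form on `ℝ⁴`, signature `(-+++)`. -/
def mink (x y : Fin 4 → ℝ) : ℝ := -(x 0 * y 0) + x 1 * y 1 + x 2 * y 2 + x 3 * y 3

/-- Lowering (equivalently raising) an index with `η = diag(-1,1,1,1)`. -/
def low (v : Fin 4 → ℝ) : Fin 4 → ℝ := fun μ => if μ = 0 then -(v μ) else v μ

/-- `v` is future-directed timelike. -/
def FDTimelike (v : Fin 4 → ℝ) : Prop := mink v v < 0 ∧ 0 < v 0

/-- `v` is future-directed unit timelike. -/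
def FDUnitTimelike (v : Fin 4 → ℝ) : Prop := mink v v = -1 ∧ 0 < v 0

/-- `mc := √(−η(P,P))`. -/
def mcOf (P : Fin 4 → ℝ) : ℝ := Real.sqrt (-(mink P P))

/-- The spin tensor `S_{μν}(x) = J_{μν} − x_μ P_ν + x_ν P_μ` about the point `x`. -/
def spinTensor (J : Fin 4 → Fin 4 → ℝ) (P x : Fin 4 → ℝ) : Fin 4 → Fin 4 → ℝ :=
  fun μ ν => J μ ν - low x μ * low P ν + low x ν * low P μ

/-- The spin supplementary condition `S_{μν}(x) f^ν = 0` with respect to `f`. -/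
def SSC (J : Fin 4 → Fin 4 → ℝ) (P x f : Fin 4 → ℝ) : Prop :=
  ∀ μ, ∑ ν, spinTensor J P x μ ν * f ν = 0

/-- Lowered components of the Newton–Wigner position observable. -/
def nwLow (J : Fin 4 → Fin 4 → ℝ) (P u : Fin 4 → ℝ) (τ : ℝ) : Fin 4 → ℝ :=
  fun μ =>
    -(∑ ρ, J μ ρ * (u ρ + P ρ / mcOf P)) / (mcOf P - mink u P)
    + τ * low P μ / (-(mink u P))
    - ((∑ l, ∑ ρ, J l ρ * u l * P ρ) / (mcOf P * (mcOf P - mink u P)))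
        * low P μ / (-(mink u P))

/-- The Newton–Wigner position observable (as a point of `ℝ⁴`). -/
def nw (J : Fin 4 → Fin 4 → ℝ) (P u : Fin 4 → ℝ) (τ : ℝ) : Fin 4 → ℝ :=
  low (nwLow J P u τ)

/-- Lowered components of the SSC position observable on the spacelike hyperplane with unit
normal `u` and distance `τ`:
`χ_μ(u,τ) = J_{μρ}f^ρ/(f·P) + τP_μ/(−u·P) − [J_{λρ}u^λf^ρ/(−f·P)]·P_μ/(−u·P)`. -/
def sscPosLow (J : Fin 4 → Fin 4 → ℝ) (P f u : Fin 4 → ℝ) (τ : ℝ) : Fin 4 → ℝ :=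
  fun μ =>
    (∑ ρ, J μ ρ * f ρ) / mink f P
    + τ * low P μ / (-(mink u P))
    - ((∑ l, ∑ ρ, J l ρ * u l * f ρ) / (-(mink f P))) * (low P μ / (-(mink u P)))

/-- The SSC position observable (as a point of `ℝ⁴`). -/
def sscPos (J : Fin 4 → Fin 4 → ℝ) (P f u : Fin 4 → ℝ) (τ : ℝ) : Fin 4 → ℝ :=
  low (sscPosLow J P f u τ)

/-! A Lorentz matrix satisfies `Λᵀ η Λ = η`, so lowered vectors transform by `(Λ⁻¹)ᵀ` and the
scalars `f·P`, `u·P` are invariant. Write `χ_μ = (J f)_μ / (f·P) + c P_μ`. The rotated part of `J'`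
contracts with `f' = Λ f` to `(Λ⁻¹)ᵀ (J f)`, and the translation part `a ∧ P'` contributes
`a_μ (f·P) − P'_μ (a·f')`. The term along `P'` and the shift `τ' = τ − u'·a` are absorbed by the
change of the coefficient `c`, which leaves `χ'_μ = ((Λ⁻¹)ᵀ χ)_μ + a_μ`, i.e. `χ' = Λ χ + a`. -/

open Matrix

lemma low_low (v : Fin 4 → ℝ) : low (low v) = v := by
  ext μ
  by_cases h : μ = 0 <;> simp [low, h]

lemma low_add (v w : Fin 4 → ℝ) : low (v + w) = low v + low w := by
  ext μ
  by_cases h : μ = 0 <;> simp [low, h]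
  ring

lemma mink_eq_low_dotProduct (x y : Fin 4 → ℝ) : mink x y = low x ⬝ᵥ y := by
  simp [mink, low, dotProduct, Fin.sum_univ_four]

lemma mink_comm (x y : Fin 4 → ℝ) : mink x y = mink y x := by
  unfold mink
  ring

-- reverse Cauchy–Schwarz: `(f⁰P⁰)² > |f⃗|²|P⃗|² ≥ (f⃗·P⃗)²` with `f⁰P⁰ > 0`
lemma FDTimelike.mink_neg {f P : Fin 4 → ℝ} (hf : FDTimelike f) (hP : FDTimelike P) :
    mink f P < 0 := by
  obtain ⟨hff, hf0⟩ := hf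
  obtain ⟨hPP, hP0⟩ := hP
  unfold mink at *
  nlinarith [sq_nonneg (f 1 * P 2 - f 2 * P 1), sq_nonneg (f 1 * P 3 - f 3 * P 1),
    sq_nonneg (f 2 * P 3 - f 3 * P 2), mul_pos hf0 hP0,
    sq_nonneg (f 0 * P 0 - (f 1 * P 1 + f 2 * P 2 + f 3 * P 3)),
    sq_nonneg (f 0 * P 0 + (f 1 * P 1 + f 2 * P 2 + f 3 * P 3))]

lemma FDUnitTimelike.fdTimelike {u : Fin 4 → ℝ} (hu : FDUnitTimelike u) : FDTimelike u :=
  ⟨by rw [hu.1]; norm_num, hu.2⟩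

lemma sscPosLow_eq_smul_add (J : Matrix (Fin 4) (Fin 4) ℝ) (P f u : Fin 4 → ℝ) (τ : ℝ) :
    sscPosLow J P f u τ = (mink f P)⁻¹ • (J *ᵥ f)
      + ((τ - u ⬝ᵥ J *ᵥ f / -mink f P) / -mink u P) • low P := by
  have hdot : ∑ l, ∑ ρ, J l ρ * u l * f ρ = u ⬝ᵥ J *ᵥ f := by
    simp only [dotProduct, mulVec, Finset.mul_sum]
    exact Finset.sum_congr rfl fun l _ => Finset.sum_congr rfl fun ρ _ => by ring
  ext μ
  simp only [sscPosLow, hdot, Pi.add_apply, Pi.smul_apply, smul_eq_mul, mulVec, dotProduct]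
  ring

def IsLorentz (Λ : Matrix (Fin 4) (Fin 4) ℝ) : Prop :=
  ∀ x y, mink (Λ *ᵥ x) (Λ *ᵥ y) = mink x y

def poincareAngMom (Λ : Matrix (Fin 4) (Fin 4) ℝ) (a P : Fin 4 → ℝ)
    (J : Matrix (Fin 4) (Fin 4) ℝ) : Matrix (Fin 4) (Fin 4) ℝ :=
  fun μ ν => (∑ ρ, ∑ s, J ρ s * Λ⁻¹ ρ μ * Λ⁻¹ s ν)
    + low a μ * (∑ ρ, low P ρ * Λ⁻¹ ρ ν) - low a ν * (∑ ρ, low P ρ * Λ⁻¹ ρ μ)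

section LorentzTransformation

variable {Λ : Matrix (Fin 4) (Fin 4) ℝ}

lemma low_mulVec_vecMul (hΛ : IsLorentz Λ) (v : Fin 4 → ℝ) :
    low (Λ *ᵥ v) ᵥ* Λ = low v := by
  ext β
  have h := hΛ v (Pi.single β 1)
  rwa [mink_eq_low_dotProduct, mink_eq_low_dotProduct, mulVec_single_one,
    dotProduct_single_one] at h

lemma IsLorentz.isUnit_det (hΛ : IsLorentz Λ) : IsUnit Λ.det := by
  refine (isUnit_iff_isUnit_det Λ).mp (mulVec_injective_iff_isUnit.mp fun v w h => ?_)
  rw [← low_low v, ← low_low w, ← low_mulVec_vecMul hΛ v, ← low_mulVec_vecMul hΛ w, h]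

lemma low_vecMul_inv (hΛ : IsLorentz Λ) (v : Fin 4 → ℝ) :
    low v ᵥ* Λ⁻¹ = low (Λ *ᵥ v) := by
  rw [← low_mulVec_vecMul hΛ v, vecMul_vecMul, mul_nonsing_inv _ hΛ.isUnit_det, vecMul_one]

lemma inv_mulVec_mulVec (hΛ : IsLorentz Λ) (v : Fin 4 → ℝ) :
    Λ⁻¹ *ᵥ (Λ *ᵥ v) = v := by
  rw [mulVec_mulVec, nonsing_inv_mul _ (hΛ.isUnit_det), one_mulVec]

lemma low_vecMul_inv_eq_mulVec_low (hΛ : IsLorentz Λ)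
    (x : Fin 4 → ℝ) : low (x ᵥ* Λ⁻¹) = Λ *ᵥ low x := by
  rw [← low_low (Λ *ᵥ low x), ← low_vecMul_inv hΛ, low_low]

lemma poincareAngMom_eq (a P : Fin 4 → ℝ) (J : Matrix (Fin 4) (Fin 4) ℝ) :
    poincareAngMom Λ a P J = Λ⁻¹ᵀ * J * Λ⁻¹
      + vecMulVec (low a) (low P ᵥ* Λ⁻¹) - vecMulVec (low P ᵥ* Λ⁻¹) (low a) := by
  ext μ ν
  simp only [poincareAngMom, Matrix.add_apply, Matrix.sub_apply, mul_apply, transpose_apply,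
    vecMulVec_apply, vecMul, dotProduct, Finset.sum_mul]
  rw [Finset.sum_comm]
  simp only [Finset.mul_sum, mul_comm, mul_left_comm]

lemma poincareAngMom_mulVec (hΛ : IsLorentz Λ)
    (a P : Fin 4 → ℝ) (J : Matrix (Fin 4) (Fin 4) ℝ) (w : Fin 4 → ℝ) :
    poincareAngMom Λ a P J *ᵥ (Λ *ᵥ w)
      = (J *ᵥ w) ᵥ* Λ⁻¹ + mink P w • low a - mink a (Λ *ᵥ w) • low (Λ *ᵥ P) := by
  rw [poincareAngMom_eq, sub_mulVec, add_mulVec, ← mulVec_mulVec, ← mulVec_mulVec,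
    inv_mulVec_mulVec hΛ, mulVec_transpose, vecMulVec_mulVec, vecMulVec_mulVec,
    op_smul_eq_smul, op_smul_eq_smul, low_vecMul_inv hΛ, ← mink_eq_low_dotProduct,
    ← mink_eq_low_dotProduct, hΛ]

lemma dotProduct_poincareAngMom_mulVec (hΛ : IsLorentz Λ)
    (a P : Fin 4 → ℝ) (J : Matrix (Fin 4) (Fin 4) ℝ) (v w : Fin 4 → ℝ) :
    Λ *ᵥ v ⬝ᵥ poincareAngMom Λ a P J *ᵥ (Λ *ᵥ w)
      = v ⬝ᵥ J *ᵥ w + mink P w * mink a (Λ *ᵥ v) - mink a (Λ *ᵥ w) * mink P v := by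
  rw [poincareAngMom_mulVec hΛ, dotProduct_sub, dotProduct_add, dotProduct_smul, dotProduct_smul,
    dotProduct_comm, ← dotProduct_mulVec, inv_mulVec_mulVec hΛ, dotProduct_comm (Λ *ᵥ v),
    dotProduct_comm (Λ *ᵥ v), ← mink_eq_low_dotProduct, ← mink_eq_low_dotProduct, hΛ,
    dotProduct_comm, smul_eq_mul, smul_eq_mul, mink_comm P v]

lemma sscPosLow_poincareAngMom (hΛ : IsLorentz Λ)
    (a P : Fin 4 → ℝ) (J : Matrix (Fin 4) (Fin 4) ℝ) {f u : Fin 4 → ℝ} (τ : ℝ)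
    (hfP : mink f P ≠ 0) (huP : mink u P ≠ 0) :
    sscPosLow (poincareAngMom Λ a P J) (Λ *ᵥ P) (Λ *ᵥ f) (Λ *ᵥ u) (τ - mink (Λ *ᵥ u) a)
      = sscPosLow J P f u τ ᵥ* Λ⁻¹ + low a := by
  rw [sscPosLow_eq_smul_add, sscPosLow_eq_smul_add, dotProduct_poincareAngMom_mulVec hΛ,
    poincareAngMom_mulVec hΛ, hΛ, hΛ, add_vecMul, smul_vecMul, smul_vecMul, low_vecMul_inv hΛ,
    mink_comm (Λ *ᵥ u) a, mink_comm P f, mink_comm P u]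
  match_scalars <;> field_simp
  ring

end LorentzTransformation

theorem sscPos_poincare_covariant_general
    (Λ : Matrix (Fin 4) (Fin 4) ℝ)
    (hΛη : ∀ x y : Fin 4 → ℝ, mink (Λ.mulVec x) (Λ.mulVec y) = mink x y)
    (a : Fin 4 → ℝ)
    (P : Fin 4 → ℝ) (hP : FDTimelike P)
    (J : Fin 4 → Fin 4 → ℝ)
    (f : Fin 4 → ℝ) (hf : FDTimelike f)
    (u : Fin 4 → ℝ) (hu : FDUnitTimelike u) (τ : ℝ) :
    sscPos
      (fun μ ν => (∑ ρ, ∑ s, J ρ s * Λ⁻¹ ρ μ * Λ⁻¹ s ν)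
        + low a μ * (∑ ρ, low P ρ * Λ⁻¹ ρ ν) - low a ν * (∑ ρ, low P ρ * Λ⁻¹ ρ μ))
      (Λ.mulVec P) (Λ.mulVec f) (Λ.mulVec u) (τ - mink (Λ.mulVec u) a)
    = Λ.mulVec (sscPos J P f u τ) + a := by
  have hfP : mink f P ≠ 0 := (hf.mink_neg hP).ne
  have huP : mink u P ≠ 0 := (hu.fdTimelike.mink_neg hP).ne
  change low (sscPosLow (poincareAngMom Λ a P J) _ _ _ _) = _
  rw [sscPosLow_poincareAngMom hΛη a P J τ hfP huP, low_add, low_low,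
    low_vecMul_inv_eq_mulVec_low hΛη, sscPos]

/-- **Covariance of SSC position observables under Poincaré transformations**: for a Lorentz
transformation `Λ` (preserving `η` and future-directed timelike vectors) and a translation `a`,
the SSC position computed from the transformed data `(P', J', f')` on the transformed hyperplane
`(u', τ')` equals `Λ·χ(u,τ) + a`. -/
theorem sscPos_poincare_covariant
    (Λ : Matrix (Fin 4) (Fin 4) ℝ)
    (hΛη : ∀ x y : Fin 4 → ℝ, mink (Λ.mulVec x) (Λ.mulVec y) = mink x y)
    (hΛfd : ∀ x : Fin 4 → ℝ, FDTimelike x → FDTimelike (Λ.mulVec x))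
    (a : Fin 4 → ℝ)
    (P : Fin 4 → ℝ) (hP : FDTimelike P)
    (J : Fin 4 → Fin 4 → ℝ) (hJ : ∀ μ ν, J μ ν = -J ν μ)
    (f : Fin 4 → ℝ) (hf : FDTimelike f)
    (u : Fin 4 → ℝ) (hu : FDUnitTimelike u) (τ : ℝ) :
    sscPos
      (fun μ ν => (∑ ρ, ∑ s, J ρ s * Λ⁻¹ ρ μ * Λ⁻¹ s ν)
        + low a μ * (∑ ρ, low P ρ * Λ⁻¹ ρ ν) - low a ν * (∑ ρ, low P ρ * Λ⁻¹ ρ μ))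
      (Λ.mulVec P) (Λ.mulVec f) (Λ.mulVec u) (τ - mink (Λ.mulVec u) a)
    = Λ.mulVec (sscPos J P f u τ) + a :=
  sscPos_poincare_covariant_general Λ hΛη a P hP J f hf u hu τ
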